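/- Let s = 2, b_1 = 2, b_2 = 3 (so τ_1 = 2, τ_2 = 1), let y = (y_1,y_2) with y_1 = Σ_{j=1}^m 2^{−2j}, y_2 = Σ_{j=1}^m 3^{−j}, and let α_m = (1/B_{τm}) Σ_{N=1}^{B_{τm}} Δ(y, (H_2(n))_{n=ỹ_m}^{ỹ_m+N−1}). Then α_m = m^2/3 − Σ_{1 ≤ k_1,k_2 ≤ m} 1/(2 · 2^{2k_1} 3^{k_2}), and in particular |α_m| ≥ m^2/4 for every m ≥ 1. -/

import Mathlib

open Finset

open scoped Classical

/-- The radical inverse function in base `b`: `φ_b(n) = Σ_j n_j b^{-j-1}`. -/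
noncomputable def radInv (b n : ℕ) : ℝ :=
  ∑' j : ℕ, ((n / b ^ j % b : ℕ) : ℝ) / (b : ℝ) ^ (j + 1)

/-- The axis-parallel box `[0, y) = ∏_i [0, y_i)`. -/
def box {s : ℕ} (y : Fin s → ℝ) : Set (Fin s → ℝ) :=
  Set.univ.pi fun i => Set.Ico 0 (y i)

/-- The discrepancy function `Δ(y, (x_n)_{n=a}^{a+N-1})`. -/
noncomputable def disc {s : ℕ} (x : ℕ → Fin s → ℝ) (a N : ℕ) (y : Fin s → ℝ) : ℝ :=
  ∑ n ∈ Finset.Ico a (a + N),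
    ((box y).indicator (fun _ => (1 : ℝ)) (x n) - ∏ i, y i)

/-- The star discrepancy of `(x_n)_{n=a}^{a+N-1}`. -/
noncomputable def Dstar {s : ℕ} (x : ℕ → Fin s → ℝ) (a N : ℕ) : ℝ :=
  sSup {v : ℝ | ∃ y : Fin s → ℝ, (∀ i, y i ∈ Set.Ico (0 : ℝ) 1) ∧
    v = |disc x a N y| / (N : ℝ)}

/-- `(x_n)_{0 ≤ n < b^m}` is a `(t,m,s)`-net in base `b`. -/
def IsNet {s : ℕ} (b t m : ℕ) (x : ℕ → Fin s → ℝ) : Prop :=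
  (∀ n < b ^ m, ∀ i, x n i ∈ Set.Ico (0 : ℝ) 1) ∧
  ∀ d a : Fin s → ℕ, (∀ i, a i < b ^ d i) → (∑ i, d i) + t = m →
    ((Finset.range (b ^ m)).filter
      (fun n => ∀ i, x n i ∈ Set.Ico ((a i : ℝ) / b ^ d i) ((a i + 1 : ℝ) / b ^ d i))).card
      = b ^ t

/-- The `j`-th `b`-adic digit (`j ≥ 1`) of a real number `x ∈ [0,1)`. -/
noncomputable def bdigit (b : ℕ) (x : ℝ) (j : ℕ) : ℕ := (⌊x * (b : ℝ) ^ j⌋ % (b : ℤ)).toNat % b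

/-- The `b`-adic absolute valuation `‖x‖_b = b^{-(k+1)}` where the digits
`x_1, …, x_k` vanish and `x_{k+1} ≠ 0`; it is `0` when all digits vanish. -/
noncomputable def bval (b : ℕ) (x : ℝ) : ℝ :=
  if h : ∃ j, 1 ≤ j ∧ bdigit b x j ≠ 0 then
    (1 : ℝ) / (b : ℝ) ^ sInf {j | 1 ≤ j ∧ bdigit b x j ≠ 0}
  else 0

/-- The `b`-adic absolute valuation of a vector, `‖x‖_b = ∏_j ‖x^{(j)}‖_b`. -/
noncomputable def bvalVec {s : ℕ} (b : ℕ) (x : Fin s → ℝ) : ℝ := ∏ i, bval b (x i)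

/-- Digitwise subtraction modulo `b`: `x ⊖ σ`. -/
noncomputable def bsub (b : ℕ) (x σ : ℝ) : ℝ :=
  ∑' j : ℕ, (((bdigit b x (j + 1) + b - bdigit b σ (j + 1)) % b : ℕ) : ℝ) / (b : ℝ) ^ (j + 1)

/-- Digitwise addition modulo `b`: `x ⊕ σ`. -/
noncomputable def badd (b : ℕ) (x σ : ℝ) : ℝ :=
  ∑' j : ℕ, (((bdigit b x (j + 1) + bdigit b σ (j + 1)) % b : ℕ) : ℝ) / (b : ℝ) ^ (j + 1)

/-- A `b^m`-point set in `[0,1)^s` is `d`-admissible in base `b`. -/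
def IsAdmissible {s : ℕ} (b m : ℕ) (d : ℤ) (x : ℕ → Fin s → ℝ) : Prop :=
  ∀ k n : ℕ, k < n → n < b ^ m →
    bvalVec b (fun i => bsub b (x n i) (x k i)) > (b : ℝ) ^ (-((m : ℤ) + d))

/-- The two-dimensional Halton sequence in bases `2` and `3`. -/
noncomputable def H23 : ℕ → Fin 2 → ℝ := fun n => ![radInv 2 n, radInv 3 n]

/-- `ytil` is the quantity `ỹ_m` for the Halton sequence in bases `2` and `3`
(so that `τ₁ = 2`, `τ₂ = 1`). -/
def IsYtilde (m ytil : ℕ) : Prop :=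
  ytil < 2 ^ (2 * (m + 1)) * 3 ^ (m + 1) ∧
  ∃ M₁ M₂ : ℤ,
    M₁ * 3 ^ (m + 1) ≡ 1 [ZMOD (2 : ℤ) ^ (2 * (m + 1))] ∧
    M₂ * 2 ^ (2 * (m + 1)) ≡ 1 [ZMOD (3 : ℤ) ^ (m + 1)] ∧
    (ytil : ℤ) ≡ M₁ * 3 ^ (m + 1) * (∑ j ∈ Finset.Icc 1 (m + 1), (2 : ℤ) ^ (2 * j - 1))
        + M₂ * 2 ^ (2 * (m + 1)) * (∑ j ∈ Finset.Icc 1 (m + 1), (3 : ℤ) ^ (j - 1))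
      [ZMOD (2 : ℤ) ^ (2 * (m + 1)) * 3 ^ (m + 1)]

/-!
Write `B = 2^(2m) 3^m`. In base `2` the corner `y₁ = 0.(01)^m` and in base `3` the corner
`y₂ = 0.1^m`, so comparing digit blocks shows `φ_b(n) < y_i` exactly when, for some `k ≤ m`, the
lowest `k - 1` blocks of `n` spell `ẏ` and the `k`-th block vanishes. Since `ỹ_m` spells `ẏ` in
its lowest `m + 1` blocks, for `n = ỹ_m + ℓ` this says that `ℓ` lies in the single residue class
`(b - 1) b^(τk - 1)` modulo `b^(τk)`; these classes are disjoint for different `k`. By the Chinese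
remainder theorem the indicator of the box at `ỹ_m + ℓ` is thus a sum over `(k₁, k₂)` of
indicators of the class of `M/6` modulo `M = 2^(2k₁) 3^k₂`, and since `M ∣ B` each class
contributes exactly `B (1/3 - 1/(2M))` to `Σ_N Δ`. The bound `|α_m| ≥ m²/4` follows from
`y₁ y₂ < 1/6`.
-/

theorem Nat.exists_mem_Icc_one_succ_iff {p : ℕ → Prop} {m : ℕ} :
    (∃ k ∈ Icc 1 (m + 1), p k) ↔ p 1 ∨ ∃ k ∈ Icc 1 m, p (k + 1) := by
  simp only [mem_Icc]
  constructor
  · rintro ⟨k, ⟨hk1, hkm⟩, hk⟩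
    rcases Nat.lt_or_ge 1 k with h | h
    · exact .inr ⟨k - 1, ⟨by omega, by omega⟩, by rwa [Nat.sub_add_cancel hk1]⟩
    · exact .inl (by rwa [show k = 1 by omega] at hk)
  · rintro (h | ⟨k, ⟨hk1, hkm⟩, hk⟩)
    · exact ⟨1, ⟨le_rfl, by omega⟩, h⟩
    · exact ⟨k + 1, ⟨by omega, by omega⟩, hk⟩

theorem Nat.add_mul_eq_add_mul_iff_of_lt {B x x' y y' : ℕ} (hx : x < B) (hx' : x' < B) :
    x + B * y = x' + B * y' ↔ x = x' ∧ y = y' := by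
  refine ⟨fun h => ?_, fun ⟨hx, hy⟩ => hx ▸ hy ▸ rfl⟩
  have hmod := congrArg (· % B) h
  have hdiv := congrArg (· / B) h
  simp only [Nat.add_mul_mod_self_left, Nat.mod_eq_of_lt hx, Nat.mod_eq_of_lt hx'] at hmod
  simp only [Nat.add_mul_div_left _ _ (by omega : 0 < B), Nat.div_eq_of_lt hx,
    Nat.div_eq_of_lt hx', zero_add] at hdiv
  exact ⟨hmod, hdiv⟩

theorem Int.ModEq.of_crt_combination {y A B M₁ M₂ E F n : ℤ} (h₁ : M₁ * A ≡ 1 [ZMOD B])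
    (hBn : B ∣ n) (h : y ≡ M₁ * A * E + M₂ * B * F [ZMOD n]) : y ≡ E [ZMOD B] :=
  calc y ≡ M₁ * A * E + M₂ * B * F [ZMOD B] := h.of_dvd hBn
    _ ≡ 1 * E + 0 [ZMOD B] :=
      (h₁.mul_right E).add (Int.modEq_zero_iff_dvd.2 ⟨M₂ * F, by ring⟩)
    _ = E := by ring

theorem Finset.sum_boole_eq_ite_exists {ι : Type*} {s : Finset ι} {p : ι → Prop} [DecidablePred p]
    (h : ∀ i ∈ s, ∀ j ∈ s, p i → p j → i = j) :
    (∑ i ∈ s, if p i then (1 : ℝ) else 0) = if ∃ i ∈ s, p i then 1 else 0 := by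
  split_ifs with hex
  · obtain ⟨i, hi, hpi⟩ := hex
    rw [sum_eq_single_of_mem i hi fun j hj hji => if_neg fun hpj => hji (h j hj i hi hpj hpi),
      if_pos hpi]
  · exact sum_eq_zero fun i hi => if_neg fun hpi => hex ⟨i, hi, hpi⟩

theorem Finset.sum_Icc_sum_range {R : Type*} [AddCommMonoid R] (f : ℕ → R) (T : ℕ) :
    ∑ N ∈ Icc 1 T, ∑ i ∈ range N, f i = ∑ i ∈ range T, (T - i) • f i := by
  rw [sum_comm' (t' := range T) (s' := fun i => Icc (i + 1) T)
    fun N i => by simp only [mem_Icc, mem_range]; omega]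
  refine sum_congr rfl fun i _ => ?_
  rw [sum_const, Nat.card_Icc, Nat.add_sub_add_right]

theorem Finset.sum_range_mul_ite_mod_eq {R : Type*} [AddCommMonoid R] {M c : ℕ} (hc : c < M)
    (f : ℕ → R) (q : ℕ) :
    ∑ i ∈ range (q * M), (if i % M = c then f i else 0) = ∑ j ∈ range q, f (j * M + c) := by
  induction q with
  | zero => simp
  | succ q ih =>
    rw [Nat.succ_mul, sum_range_add, ih, sum_range_succ]
    congr 1
    rw [sum_eq_single_of_mem c (mem_range.2 hc)]
    · simp [Nat.mod_eq_of_lt hc]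
    · intro i hi hic
      rw [Nat.mul_add_mod_self_right, Nat.mod_eq_of_lt (mem_range.1 hi), if_neg hic]

theorem sum_range_cast_tsub (T : ℕ) : ∑ i ∈ range T, ((T - i : ℕ) : ℝ) = T * (T + 1) / 2 := by
  induction T with
  | zero => simp
  | succ T ih =>
    rw [sum_range_succ', Nat.sub_zero]
    simp only [Nat.add_sub_add_right, ih]
    push_cast
    ring

theorem sum_range_tsub_mul_boole_mod_sub {M c : ℕ} (hc : c < M) (q : ℕ) :
    ∑ i ∈ range (q * M), ((q * M - i : ℕ) : ℝ) * ((if i % M = c then 1 else 0) - 1 / M) =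
      q * (M - 1 - 2 * c) / 2 := by
  have hM : (M : ℝ) ≠ 0 := by exact_mod_cast (by omega : M ≠ 0)
  have hterm : ∀ j ∈ range q, ((q * M - (j * M + c) : ℕ) : ℝ) = ((q - j : ℕ) : ℝ) * M - c := by
    intro j hj
    have hjq : j + 1 ≤ q := mem_range.1 hj
    have : j * M + c ≤ q * M := by nlinarith
    rw [Nat.cast_sub this, Nat.cast_sub (by omega : j ≤ q)]
    push_cast
    ring
  simp only [mul_sub, mul_ite, mul_one, mul_zero, sum_sub_distrib, sum_range_mul_ite_mod_eq hc,
    ← sum_mul, sum_range_cast_tsub, sum_congr rfl hterm, sum_const, card_range, nsmul_eq_mul]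
  push_cast
  field_simp
  ring

section RadicalInverse

variable {b : ℕ}

theorem radInv_zero (b : ℕ) : radInv b 0 = 0 := by
  simp [radInv]

theorem radInv_nonneg (b n : ℕ) : 0 ≤ radInv b n :=
  tsum_nonneg fun _ => by positivity

theorem radInv_eq_mod_add_radInv_div (hb : 1 < b) (n : ℕ) :
    radInv b n = (n % b : ℕ) / b + radInv b (n / b) / b := by
  have hfin : ∀ j ∉ range n, ((n / b ^ j % b : ℕ) : ℝ) / (b : ℝ) ^ (j + 1) = 0 := by
    intro j hj
    have : n < b ^ j := (Nat.lt_two_pow_self.trans_le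
      (Nat.pow_le_pow_right zero_lt_two (by simpa using hj))).trans_le (Nat.pow_le_pow_left hb j)
    simp [Nat.div_eq_of_lt this]
  rw [radInv, (summable_of_ne_finset_zero hfin).tsum_eq_zero_add, radInv, ← tsum_div_const]
  congr 1
  · simp
  · refine tsum_congr fun j => ?_
    rw [pow_succ' b j, ← Nat.div_div_eq_div_mul, pow_succ' (b : ℝ) (j + 1)]
    ring

theorem radInv_add_mul (hb : 1 < b) {d : ℕ} (hd : d < b) (n : ℕ) :
    radInv b (d + b * n) = d / b + radInv b n / b := by
  rw [radInv_eq_mod_add_radInv_div hb, Nat.add_mul_mod_self_left, Nat.mod_eq_of_lt hd,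
    Nat.add_mul_div_left _ _ (by omega), Nat.div_eq_of_lt hd, zero_add]

theorem radInv_lt_one (hb : 1 < b) (n : ℕ) : radInv b n < 1 := by
  induction n using Nat.strong_induction_on with
  | _ n ih =>
    rcases Nat.eq_zero_or_pos n with rfl | hn
    · simp [radInv_zero]
    have hdigit : ((n % b : ℕ) : ℝ) + 1 ≤ b := by exact_mod_cast Nat.mod_lt n (by omega)
    have hb0 : (0 : ℝ) < b := by positivity
    rw [radInv_eq_mod_add_radInv_div hb, ← add_div, div_lt_one hb0]
    linarith [ih (n / b) (Nat.div_lt_self hn hb)]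

theorem radInv_eq_radInv_mod_add (hb : 1 < b) (t n : ℕ) :
    radInv b n = radInv b (n % b ^ t) + radInv b (n / b ^ t) / (b : ℝ) ^ t := by
  induction t generalizing n with
  | zero => simp [Nat.mod_one, radInv_zero]
  | succ t ih =>
    rw [pow_succ', Nat.mod_mul, ← Nat.div_div_eq_div_mul, radInv_eq_mod_add_radInv_div hb n,
      ih (n / b), radInv_add_mul hb (Nat.mod_lt _ (by omega)), pow_succ']
    field_simp
    ring

theorem radInv_pow (hb : 1 < b) (k : ℕ) : radInv b (b ^ k) = ((b : ℝ) ^ (k + 1))⁻¹ := by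
  have hone : radInv b 1 = (b : ℝ)⁻¹ := by
    simpa [radInv_zero] using radInv_add_mul hb hb 0
  rw [radInv_eq_radInv_mod_add hb k, Nat.mod_self, Nat.div_self (by positivity), radInv_zero,
    zero_add, hone, pow_succ]
  field_simp

theorem inv_pow_le_radInv (hb : 1 < b) {t r : ℕ} (hr0 : r ≠ 0) (hr : r < b ^ t) :
    ((b : ℝ) ^ t)⁻¹ ≤ radInv b r := by
  induction t generalizing r with
  | zero => simp at hr; omega
  | succ t ih =>
    have hb0 : (0 : ℝ) < b := by positivity
    rw [radInv_eq_mod_add_radInv_div hb, pow_succ', mul_inv]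
    by_cases hd : r % b = 0
    · have hq0 : r / b ≠ 0 := by
        intro h; exact hr0 (by rw [← Nat.mod_add_div r b, hd, h]; simp)
      have hq : r / b < b ^ t := Nat.div_lt_of_lt_mul (by rwa [← pow_succ'])
      rw [hd, Nat.cast_zero, zero_div, zero_add, div_eq_inv_mul]
      exact mul_le_mul_of_nonneg_left (ih hq0 hq) (by positivity)
    · have h1 : (1 : ℝ) ≤ (r % b : ℕ) := by exact_mod_cast Nat.one_le_iff_ne_zero.2 hd
      have h2 : ((b : ℝ) ^ t)⁻¹ ≤ 1 := inv_le_one_of_one_le₀ (one_le_pow₀ (by exact_mod_cast hb.le))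
      calc (b : ℝ)⁻¹ * ((b : ℝ) ^ t)⁻¹ ≤ 1 / b := by
            rw [one_div]; exact mul_le_of_le_one_right (by positivity) h2
        _ ≤ (r % b : ℕ) / b := div_le_div_of_nonneg_right h1 hb0.le
        _ ≤ (r % b : ℕ) / b + radInv b (r / b) / b :=
          le_add_of_nonneg_right (div_nonneg (radInv_nonneg _ _) hb0.le)

theorem two_div_le_radInv (hb : 1 < b) {t r : ℕ} (hr0 : r ≠ 0) (hr1 : r ≠ b ^ (t - 1))
    (hr : r < b ^ t) : 2 / (b : ℝ) ^ t ≤ radInv b r := by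
  obtain ⟨s, rfl⟩ : ∃ s, t = s + 1 :=
    Nat.exists_eq_succ_of_ne_zero fun ht => hr0 (by simpa [ht] using hr)
  have hb0 : (0 : ℝ) < b := by positivity
  have hd : r / b ^ s < b := Nat.div_lt_of_lt_mul (by rwa [← pow_succ])
  have hdigit : radInv b (r / b ^ s) = (r / b ^ s : ℕ) / b := by
    simpa [radInv_zero] using radInv_add_mul hb hd 0
  rw [radInv_eq_radInv_mod_add hb s, hdigit, pow_succ]
  by_cases hlow : r % b ^ s = 0
  · have h2 : (2 : ℝ) ≤ (r / b ^ s : ℕ) := by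
      have hr' : b ^ s * (r / b ^ s) = r := by simpa [hlow] using Nat.div_add_mod r (b ^ s)
      have h0 : r / b ^ s ≠ 0 := fun h => hr0 (by rw [← hr', h, mul_zero])
      have h1 : r / b ^ s ≠ 1 := fun h => hr1 (by rw [← hr', h, mul_one, Nat.add_sub_cancel])
      exact_mod_cast Nat.two_le_iff _ |>.2 ⟨h0, h1⟩
    rw [hlow, radInv_zero, zero_add, div_div, mul_comm (b : ℝ)]
    gcongr
  · have hb2 : (2 : ℝ) ≤ b := by exact_mod_cast hb
    calc 2 / ((b : ℝ) ^ s * b) ≤ ((b : ℝ) ^ s)⁻¹ := by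
          rw [div_le_iff₀ (by positivity)]; field_simp; exact hb2
      _ ≤ radInv b (r % b ^ s) := inv_pow_le_radInv hb hlow (Nat.mod_lt _ (by positivity))
      _ ≤ _ := le_add_of_nonneg_right (by positivity)

end RadicalInverse

def ydot (b τ k : ℕ) : ℕ := ∑ j ∈ Icc 1 k, b ^ (τ * j - 1)

noncomputable def yCoord (b τ m : ℕ) : ℝ := ∑ j ∈ Icc 1 m, ((b : ℝ) ^ (τ * j))⁻¹

section Digits

variable {b τ : ℕ}

@[simp] theorem ydot_zero : ydot b τ 0 = 0 := by simp [ydot]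

theorem ydot_succ (k : ℕ) : ydot b τ (k + 1) = ydot b τ k + b ^ (τ * (k + 1) - 1) :=
  sum_Icc_succ_top (by omega) _

theorem ydot_succ' (hτ : 1 ≤ τ) (k : ℕ) : ydot b τ (k + 1) = b ^ (τ - 1) + b ^ τ * ydot b τ k := by
  induction k with
  | zero => simp [ydot_succ]
  | succ k ih =>
    have hexp : τ * (k + 1 + 1) - 1 = τ + (τ * (k + 1) - 1) := by
      have : 1 ≤ τ * (k + 1) := Nat.one_le_iff_ne_zero.2 (by positivity)
      rw [Nat.mul_succ τ (k + 1)]; omega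
    conv_lhs => rw [ydot_succ, ih, hexp, pow_add]
    rw [ydot_succ k]
    ring

theorem ydot_lt (hb : 1 < b) (hτ : 1 ≤ τ) (k : ℕ) : ydot b τ k < b ^ (τ * k) := by
  induction k with
  | zero => simp
  | succ k ih =>
    have htop : b ^ (τ - 1) < b ^ τ := Nat.pow_lt_pow_right hb (by omega)
    calc ydot b τ (k + 1) < b ^ τ + b ^ τ * ydot b τ k := by rw [ydot_succ' hτ]; omega
      _ = b ^ τ * (ydot b τ k + 1) := by ring
      _ ≤ b ^ τ * b ^ (τ * k) := Nat.mul_le_mul_left _ ih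
      _ = b ^ (τ * (k + 1)) := by rw [← pow_add]; ring_nf

theorem ydot_modEq_of_le (hτ : 1 ≤ τ) {k K : ℕ} (h : k ≤ K) :
    ydot b τ K ≡ ydot b τ k [MOD b ^ (τ * k)] := by
  induction K, h using Nat.le_induction with
  | base => rfl
  | succ K hkK ih =>
    have hdvd : b ^ (τ * k) ∣ b ^ (τ * (K + 1) - 1) := by
      refine pow_dvd_pow b ?_
      have := Nat.mul_le_mul_left τ hkK
      rw [Nat.mul_succ]; omega
    rw [ydot_succ]
    exact ((Nat.modEq_zero_iff_dvd.2 hdvd).add_left _).trans (by simpa using ih)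

theorem yCoord_nonneg (b τ m : ℕ) : 0 ≤ yCoord b τ m :=
  sum_nonneg fun _ _ => by positivity

theorem yCoord_succ (hb : b ≠ 0) (m : ℕ) :
    yCoord b τ (m + 1) = (1 + yCoord b τ m) / (b : ℝ) ^ τ := by
  have hb' : (b : ℝ) ≠ 0 := by exact_mod_cast hb
  induction m with
  | zero => simp [yCoord]
  | succ m ih =>
    have htop (k : ℕ) : yCoord b τ (k + 1) = yCoord b τ k + ((b : ℝ) ^ (τ * (k + 1)))⁻¹ :=
      sum_Icc_succ_top (by omega) _
    calc yCoord b τ (m + 1 + 1)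
        = (1 + yCoord b τ m) / (b : ℝ) ^ τ + ((b : ℝ) ^ (τ * (m + 1 + 1)))⁻¹ := by rw [htop, ih]
      _ = (1 + yCoord b τ (m + 1)) / (b : ℝ) ^ τ := by
        rw [htop m, Nat.mul_succ τ (m + 1), pow_add]
        field_simp
        ring

theorem two_le_cast_pow (hb : 1 < b) (hτ : 1 ≤ τ) : (2 : ℝ) ≤ (b : ℝ) ^ τ :=
  le_trans (by exact_mod_cast hb) (le_self_pow₀ (by exact_mod_cast hb.le) (by omega))

theorem yCoord_lt (hb : 1 < b) (hτ : 1 ≤ τ) (m : ℕ) :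
    yCoord b τ m < 1 / ((b : ℝ) ^ τ - 1) := by
  have hB := two_le_cast_pow hb hτ
  have hB1 : (0 : ℝ) < (b : ℝ) ^ τ - 1 := by linarith
  induction m with
  | zero => simp [yCoord, hB1]
  | succ m ih =>
    rw [yCoord_succ (by omega), div_lt_iff₀ (by linarith)]
    calc 1 + yCoord b τ m < 1 + 1 / ((b : ℝ) ^ τ - 1) := by linarith
      _ = 1 / ((b : ℝ) ^ τ - 1) * (b : ℝ) ^ τ := by field_simp; ring

theorem yCoord_lt_one (hb : 1 < b) (hτ : 1 ≤ τ) (m : ℕ) : yCoord b τ m < 1 := by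
  have hB := two_le_cast_pow hb hτ
  exact (yCoord_lt hb hτ m).trans_le ((div_le_one (by linarith)).2 (by linarith))

theorem mod_pow_eq_ydot_iff (hb : 1 < b) (hτ : 1 ≤ τ) (n : ℕ) {k : ℕ} (hk : 1 ≤ k) :
    n % b ^ (τ * (k + 1)) = ydot b τ k ↔
      n % b ^ τ = b ^ (τ - 1) ∧ n / b ^ τ % b ^ (τ * k) = ydot b τ (k - 1) := by
  obtain ⟨k, rfl⟩ : ∃ k', k = k' + 1 := ⟨k - 1, by omega⟩
  rw [Nat.add_sub_cancel, ydot_succ' hτ, show τ * (k + 1 + 1) = τ + τ * (k + 1) by ring, pow_add,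
    Nat.mod_mul]
  exact Nat.add_mul_eq_add_mul_iff_of_lt (Nat.mod_lt _ (by positivity))
    (Nat.pow_lt_pow_right hb (by omega))

theorem radInv_lt_yCoord_iff (hb : 1 < b) (hτ : 1 ≤ τ) (m n : ℕ) :
    radInv b n < yCoord b τ m ↔ ∃ k ∈ Icc 1 m, n % b ^ (τ * k) = ydot b τ (k - 1) := by
  induction m generalizing n with
  | zero => simp [yCoord, radInv_nonneg]
  | succ m ih =>
    have hB : (0 : ℝ) < (b : ℝ) ^ τ := by positivity
    have hq₀ := radInv_nonneg b (n / b ^ τ)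
    have hq₁ := radInv_lt_one hb (n / b ^ τ)
    have hy₀ := yCoord_nonneg b τ m
    have hy₁ := yCoord_lt_one hb hτ m
    have htail : (∃ k ∈ Icc 1 m, n % b ^ (τ * (k + 1)) = ydot b τ (k + 1 - 1)) ↔
        n % b ^ τ = b ^ (τ - 1) ∧ radInv b (n / b ^ τ) < yCoord b τ m := by
      rw [ih]
      constructor
      · rintro ⟨k, hk, h⟩
        rw [Nat.add_sub_cancel, mod_pow_eq_ydot_iff hb hτ n (mem_Icc.1 hk).1] at h
        exact ⟨h.1, k, hk, h.2⟩
      · rintro ⟨hr, k, hk, h⟩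
        refine ⟨k, hk, ?_⟩
        rw [Nat.add_sub_cancel, mod_pow_eq_ydot_iff hb hτ n (mem_Icc.1 hk).1]
        exact ⟨hr, h⟩
    rw [Nat.exists_mem_Icc_one_succ_iff, htail, radInv_eq_radInv_mod_add hb τ n,
      yCoord_succ (by omega)]
    simp only [mul_one, Nat.sub_self, ydot_zero]
    -- The lowest block `r = n % b^τ` decides: `r = 0` puts `φ_b(n)` below `b^(-τ) ≤ y`,
    -- `r = b^(τ-1)` passes to `n / b^τ`, and any other `r` gives `φ_b(n) ≥ 2 b^(-τ) > y`.
    by_cases hr₀ : n % b ^ τ = 0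
    · simp only [hr₀, radInv_zero, zero_add, true_or, iff_true]
      gcongr
      linarith
    by_cases hr₁ : n % b ^ τ = b ^ (τ - 1)
    · rw [hr₁, radInv_pow hb, Nat.sub_add_cancel hτ, inv_eq_one_div, ← add_div,
        div_lt_div_iff_of_pos_right hB, add_lt_add_iff_left,
        or_iff_right (pow_ne_zero _ (by omega)), and_iff_right rfl]
    · simp only [hr₀, hr₁, false_or, false_and, iff_false, not_lt]
      have h2 := two_div_le_radInv hb hr₀ hr₁ (Nat.mod_lt n (by positivity))
      calc (1 + yCoord b τ m) / (b : ℝ) ^ τ ≤ 2 / (b : ℝ) ^ τ := by gcongr; linarith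
        _ ≤ _ := le_add_of_le_of_nonneg h2 (by positivity)

theorem radInv_add_lt_yCoord_iff (hb : 1 < b) (hτ : 1 ≤ τ) {m a : ℕ}
    (ha : a ≡ ydot b τ m [MOD b ^ (τ * m)]) (ℓ : ℕ) :
    radInv b (a + ℓ) < yCoord b τ m ↔
      ∃ k ∈ Icc 1 m, ℓ % b ^ (τ * k) = (b - 1) * b ^ (τ * k - 1) := by
  rw [radInv_lt_yCoord_iff hb hτ]
  refine exists_congr fun k => and_congr_right fun hk => ?_
  obtain ⟨hk1, hkm⟩ := mem_Icc.1 hk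
  have hτk : τ * k ≠ 0 := by positivity
  have haM : a ≡ ydot b τ k [MOD b ^ (τ * k)] :=
    (ha.of_dvd (pow_dvd_pow b (Nat.mul_le_mul_left τ hkm))).trans (ydot_modEq_of_le hτ hkm)
  have hydot : ydot b τ k = ydot b τ (k - 1) + b ^ (τ * k - 1) := by
    simpa [Nat.sub_add_cancel hk1] using ydot_succ (b := b) (τ := τ) (k - 1)
  have hc : (b - 1) * b ^ (τ * k - 1) + b ^ (τ * k - 1) = b ^ (τ * k) := by
    rw [← Nat.succ_mul, Nat.succ_eq_add_one, Nat.sub_add_cancel hb.le, mul_pow_sub_one hτk]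
  have hlt₁ : ydot b τ (k - 1) < b ^ (τ * k) :=
    (ydot_lt hb hτ _).trans_le (Nat.pow_le_pow_right (by omega) (Nat.mul_le_mul_left τ (by omega)))
  have hlt₂ : (b - 1) * b ^ (τ * k - 1) < b ^ (τ * k) := by
    have : 0 < b ^ (τ * k - 1) := by positivity
    omega
  rw [← Nat.mod_eq_of_lt hlt₁, ← Nat.mod_eq_of_lt hlt₂, ← Nat.ModEq, ← Nat.ModEq,
    ← ZMod.natCast_eq_natCast_iff, ← ZMod.natCast_eq_natCast_iff]
  have haM' := (ZMod.natCast_eq_natCast_iff _ _ _).2 haM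
  have hc' := congrArg (Nat.cast : ℕ → ZMod (b ^ (τ * k))) hc
  have hM : ((b ^ (τ * k) : ℕ) : ZMod (b ^ (τ * k))) = 0 := ZMod.natCast_self _
  -- modulo `b^(τk)`: `a = ẏ_(k-1) + b^(τk-1)` and `(b - 1) b^(τk-1) = -b^(τk-1)`
  push_cast [hydot] at haM' hc' hM ⊢
  rw [haM']
  constructor <;> intro h
  · linear_combination h - hc' - hM
  · linear_combination h + hc' + hM

theorem eq_of_mod_pow_eq (hb : 1 < b) (hτ : 1 ≤ τ) {ℓ k k' : ℕ} (hk : 1 ≤ k) (hk' : 1 ≤ k')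
    (h : ℓ % b ^ (τ * k) = (b - 1) * b ^ (τ * k - 1))
    (h' : ℓ % b ^ (τ * k') = (b - 1) * b ^ (τ * k' - 1)) : k = k' := by
  wlog hle : k ≤ k' generalizing k k'
  · exact (this hk' hk h' h (by omega)).symm
  rcases hle.eq_or_lt with heq | hlt
  · exact heq
  exfalso
  have hdvd : b ^ (τ * k) ∣ b ^ (τ * k' - 1) := by
    refine pow_dvd_pow b ?_
    have := Nat.mul_le_mul_left τ hlt
    rw [Nat.mul_succ] at this
    omega
  have hmod := Nat.mod_mod_of_dvd ℓ (pow_dvd_pow b (Nat.mul_le_mul_left τ hlt.le))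
  rw [h', h, Nat.mod_eq_zero_of_dvd (hdvd.mul_left _)] at hmod
  have : 0 < (b - 1) * b ^ (τ * k - 1) := Nat.mul_pos (by omega) (by positivity)
  omega

theorem ite_radInv_add_lt_yCoord (hb : 1 < b) (hτ : 1 ≤ τ) {m a : ℕ}
    (ha : a ≡ ydot b τ m [MOD b ^ (τ * m)]) (ℓ : ℕ) :
    (if radInv b (a + ℓ) < yCoord b τ m then (1 : ℝ) else 0) =
      ∑ k ∈ Icc 1 m, if ℓ % b ^ (τ * k) = (b - 1) * b ^ (τ * k - 1) then 1 else 0 := by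
  rw [sum_boole_eq_ite_exists fun k hk k' hk' =>
    eq_of_mod_pow_eq hb hτ (mem_Icc.1 hk).1 (mem_Icc.1 hk').1]
  exact if_congr (radInv_add_lt_yCoord_iff hb hτ ha ℓ) rfl rfl

end Digits

theorem sum_Icc_disc {s : ℕ} (x : ℕ → Fin s → ℝ) (a T : ℕ) (y : Fin s → ℝ) :
    ∑ N ∈ Icc 1 T, disc x a N y =
      ∑ i ∈ range T,
        ((T - i : ℕ) : ℝ) * ((box y).indicator (fun _ => 1) (x (a + i)) - ∏ j, y j) := by
  simp only [disc, sum_Ico_eq_sum_range, Nat.add_sub_cancel_left, ← nsmul_eq_mul]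
  exact sum_Icc_sum_range _ T

theorem IsYtilde.modEq_ydot_two {m a : ℕ} (hy : IsYtilde m a) :
    a ≡ ydot 2 2 m [MOD 2 ^ (2 * m)] := by
  obtain ⟨-, M₁, M₂, h₁, -, h⟩ := hy
  have h' : a ≡ ydot 2 2 (m + 1) [MOD 2 ^ (2 * (m + 1))] := by
    rw [← Int.natCast_modEq_iff]
    push_cast [ydot]
    exact Int.ModEq.of_crt_combination h₁ (dvd_mul_right _ _) h
  exact (h'.of_dvd (pow_dvd_pow 2 (by omega))).trans (ydot_modEq_of_le (by norm_num) (by omega))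

theorem IsYtilde.modEq_ydot_three {m a : ℕ} (hy : IsYtilde m a) :
    a ≡ ydot 3 1 m [MOD 3 ^ (1 * m)] := by
  obtain ⟨-, M₁, M₂, -, h₂, h⟩ := hy
  have h' : a ≡ ydot 3 1 (m + 1) [MOD 3 ^ (1 * (m + 1))] := by
    rw [← Int.natCast_modEq_iff]
    push_cast [ydot, one_mul]
    rw [add_comm (M₁ * _ * _)] at h
    exact Int.ModEq.of_crt_combination h₂ (dvd_mul_left _ _) h
  exact (h'.of_dvd (pow_dvd_pow 3 (by omega))).trans (ydot_modEq_of_le le_rfl (by omega))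

theorem mod_two_pow_mul_three_pow_eq_iff {k₁ k₂ ℓ : ℕ} (hk₁ : 1 ≤ k₁) (hk₂ : 1 ≤ k₂) :
    (ℓ % 2 ^ (2 * k₁) = 2 ^ (2 * k₁ - 1) ∧ ℓ % 3 ^ k₂ = 2 * 3 ^ (k₂ - 1)) ↔
      ℓ % (2 ^ (2 * k₁) * 3 ^ k₂) = 2 ^ (2 * k₁ - 1) * 3 ^ (k₂ - 1) := by
  set c := 2 ^ (2 * k₁ - 1) * 3 ^ (k₂ - 1)
  have hlt₂ : 2 ^ (2 * k₁ - 1) < 2 ^ (2 * k₁) := Nat.pow_lt_pow_right (by norm_num) (by omega)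
  have hlt₃ : 3 ^ (k₂ - 1) < 3 ^ k₂ := Nat.pow_lt_pow_right (by norm_num) (by omega)
  have h₂ : c ≡ 2 ^ (2 * k₁ - 1) [MOD 2 ^ (2 * k₁)] := by
    have h := ((show 3 ≡ 1 [MOD 2] by decide).pow (k₂ - 1)).mul_left' (2 ^ (2 * k₁ - 1))
    rwa [one_pow, mul_one, ← pow_succ, Nat.sub_add_cancel (by omega)] at h
  have h₃ : c ≡ 2 * 3 ^ (k₂ - 1) [MOD 3 ^ k₂] := by
    have h4 : 2 ^ (2 * k₁ - 1) ≡ 2 [MOD 3] := by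
      have h := ((show 4 ≡ 1 [MOD 3] by decide).pow (k₁ - 1)).mul_right 2
      rwa [one_pow, one_mul, show 4 = 2 ^ 2 by rfl, ← pow_mul, ← pow_succ,
        show 2 * (k₁ - 1) + 1 = 2 * k₁ - 1 by omega] at h
    have h := h4.mul_left' (3 ^ (k₂ - 1))
    rwa [← pow_succ, Nat.sub_add_cancel hk₂, mul_comm, mul_comm (3 ^ (k₂ - 1))] at h
  have hlt₃' : 2 * 3 ^ (k₂ - 1) < 3 ^ k₂ :=
    calc 2 * 3 ^ (k₂ - 1) < 3 * 3 ^ (k₂ - 1) := by gcongr; norm_num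
      _ = 3 ^ k₂ := mul_pow_sub_one (by omega) 3
  have hc₂ : c % 2 ^ (2 * k₁) = 2 ^ (2 * k₁ - 1) := Eq.trans h₂ (Nat.mod_eq_of_lt hlt₂)
  have hc₃ : c % 3 ^ k₂ = 2 * 3 ^ (k₂ - 1) := Eq.trans h₃ (Nat.mod_eq_of_lt hlt₃')
  have hcM : c % (2 ^ (2 * k₁) * 3 ^ k₂) = c := Nat.mod_eq_of_lt (Nat.mul_lt_mul'' hlt₂ hlt₃)
  rw [← hc₂, ← hc₃]
  conv_rhs => rw [← hcM]
  exact Nat.modEq_and_modEq_iff_modEq_mul (Nat.Coprime.pow _ _ (by norm_num))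

theorem indicator_box_H23 (n : ℕ) (y₁ y₂ : ℝ) :
    (box ![y₁, y₂]).indicator (fun _ => (1 : ℝ)) (H23 n) =
      if radInv 2 n < y₁ ∧ radInv 3 n < y₂ then 1 else 0 := by
  simp [Set.indicator_apply, _root_.box, H23, Fin.forall_fin_two, radInv_nonneg]

theorem indicator_box_H23_add_eq_sum {m a : ℕ} (h₂ : a ≡ ydot 2 2 m [MOD 2 ^ (2 * m)])
    (h₃ : a ≡ ydot 3 1 m [MOD 3 ^ (1 * m)]) (ℓ : ℕ) :
    (box ![yCoord 2 2 m, yCoord 3 1 m]).indicator (fun _ => (1 : ℝ)) (H23 (a + ℓ)) =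
      ∑ k₁ ∈ Icc 1 m, ∑ k₂ ∈ Icc 1 m,
        if ℓ % (2 ^ (2 * k₁) * 3 ^ k₂) = 2 ^ (2 * k₁ - 1) * 3 ^ (k₂ - 1) then 1 else 0 := by
  rw [indicator_box_H23, ← mul_one (1 : ℝ), ← ite_zero_mul_ite_zero,
    ite_radInv_add_lt_yCoord (by norm_num) (by norm_num) h₂,
    ite_radInv_add_lt_yCoord (by norm_num) (by norm_num) h₃, sum_mul_sum]
  refine sum_congr rfl fun k₁ hk₁ => sum_congr rfl fun k₂ hk₂ => ?_
  rw [ite_zero_mul_ite_zero, mul_one]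
  simp only [one_mul, Nat.add_one_sub_one]
  exact if_congr (mod_two_pow_mul_three_pow_eq_iff (mem_Icc.1 hk₁).1 (mem_Icc.1 hk₂).1) rfl rfl

theorem yCoord_two_mul_yCoord_three (m : ℕ) :
    yCoord 2 2 m * yCoord 3 1 m =
      ∑ k₁ ∈ Icc 1 m, ∑ k₂ ∈ Icc 1 m, 1 / ((2 : ℝ) ^ (2 * k₁) * 3 ^ k₂) := by
  simp only [yCoord, sum_mul_sum, Nat.cast_ofNat, one_mul, one_div, mul_inv]

theorem sum_range_tsub_mul_boole_mod_sub_H23 {m k₁ k₂ : ℕ} (hk₁ : k₁ ∈ Icc 1 m)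
    (hk₂ : k₂ ∈ Icc 1 m) :
    ∑ i ∈ range (2 ^ (2 * m) * 3 ^ m), ((2 ^ (2 * m) * 3 ^ m - i : ℕ) : ℝ) *
        ((if i % (2 ^ (2 * k₁) * 3 ^ k₂) = 2 ^ (2 * k₁ - 1) * 3 ^ (k₂ - 1) then 1 else 0) -
          1 / ((2 ^ (2 * k₁) * 3 ^ k₂ : ℕ) : ℝ)) =
      (2 : ℝ) ^ (2 * m) * 3 ^ m / 3 -
        (2 : ℝ) ^ (2 * m) * 3 ^ m / (2 * (2 : ℝ) ^ (2 * k₁) * 3 ^ k₂) := by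
  obtain ⟨hk₁, hk₁m⟩ := mem_Icc.1 hk₁
  obtain ⟨hk₂, hk₂m⟩ := mem_Icc.1 hk₂
  obtain ⟨q, hq⟩ : 2 ^ (2 * k₁) * 3 ^ k₂ ∣ 2 ^ (2 * m) * 3 ^ m :=
    mul_dvd_mul (pow_dvd_pow 2 (by omega)) (pow_dvd_pow 3 hk₂m)
  have h6 : 6 * (2 ^ (2 * k₁ - 1) * 3 ^ (k₂ - 1)) = 2 ^ (2 * k₁) * 3 ^ k₂ := by
    rw [show 6 = 2 * 3 by rfl, mul_mul_mul_comm, mul_pow_sub_one (by omega),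
      mul_pow_sub_one (by omega)]
  have hc : 2 ^ (2 * k₁ - 1) * 3 ^ (k₂ - 1) < 2 ^ (2 * k₁) * 3 ^ k₂ := by
    have : 0 < 2 ^ (2 * k₁ - 1) * 3 ^ (k₂ - 1) := by positivity
    omega
  have hT : ((2 : ℝ) ^ (2 * m) * 3 ^ m) = q * (2 ^ (2 * k₁) * 3 ^ k₂ : ℕ) := by
    exact_mod_cast hq.trans (mul_comm _ _)
  have h6' : (2 : ℝ) ^ (2 * k₁) * 3 ^ k₂ = 6 * (2 ^ (2 * k₁ - 1) * 3 ^ (k₂ - 1)) := by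
    exact_mod_cast h6.symm
  rw [hq, mul_comm, sum_range_tsub_mul_boole_mod_sub hc, hT, mul_assoc 2]
  push_cast
  rw [h6']
  field_simp
  ring

theorem sum_disc_H23 {m a : ℕ} (h₂ : a ≡ ydot 2 2 m [MOD 2 ^ (2 * m)])
    (h₃ : a ≡ ydot 3 1 m [MOD 3 ^ (1 * m)]) :
    ∑ N ∈ Icc 1 (2 ^ (2 * m) * 3 ^ m), disc H23 a N ![yCoord 2 2 m, yCoord 3 1 m] =
      (2 : ℝ) ^ (2 * m) * 3 ^ m * ((m : ℝ) ^ 2 / 3 -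
        ∑ k₁ ∈ Icc 1 m, ∑ k₂ ∈ Icc 1 m, 1 / (2 * (2 : ℝ) ^ (2 * k₁) * 3 ^ k₂)) := by
  have hcells (i : ℕ) :
      (box ![yCoord 2 2 m, yCoord 3 1 m]).indicator (fun _ => 1) (H23 (a + i)) -
          ∏ j, ![yCoord 2 2 m, yCoord 3 1 m] j =
        ∑ k₁ ∈ Icc 1 m, ∑ k₂ ∈ Icc 1 m,
          ((if i % (2 ^ (2 * k₁) * 3 ^ k₂) = 2 ^ (2 * k₁ - 1) * 3 ^ (k₂ - 1) then 1 else 0) -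
            1 / ((2 ^ (2 * k₁) * 3 ^ k₂ : ℕ) : ℝ)) := by
    rw [indicator_box_H23_add_eq_sum h₂ h₃, Fin.prod_univ_two]
    simp only [Matrix.cons_val_zero, Matrix.cons_val_one, yCoord_two_mul_yCoord_three,
      ← sum_sub_distrib]
    push_cast
    rfl
  rw [sum_Icc_disc]
  simp only [hcells, mul_sum]
  rw [sum_comm]
  calc _ = ∑ k₁ ∈ Icc 1 m, ∑ k₂ ∈ Icc 1 m, ((2 : ℝ) ^ (2 * m) * 3 ^ m / 3 -
        (2 : ℝ) ^ (2 * m) * 3 ^ m / (2 * (2 : ℝ) ^ (2 * k₁) * 3 ^ k₂)) := by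
        refine sum_congr rfl fun k₁ hk₁ => ?_
        rw [sum_comm]
        exact sum_congr rfl fun k₂ hk₂ => sum_range_tsub_mul_boole_mod_sub_H23 hk₁ hk₂
    _ = _ := by
        simp only [sum_sub_distrib, sum_const, Nat.card_Icc, nsmul_eq_mul, mul_sub, mul_sum]
        push_cast
        field_simp

/-- Lemma 4.5 for bases `2` and `3`: explicit value for `α_m` and the lower
bound `|α_m| ≥ m²/4`. -/
theorem halton23_alpha_lower_bound (m : ℕ) (hm : 1 ≤ m)
    (ytil : ℕ) (hy : IsYtilde m ytil) (α : ℝ)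
    (hα : α = (1 / ((2 : ℝ) ^ (2 * m) * 3 ^ m)) *
        ∑ N ∈ Finset.Icc 1 (2 ^ (2 * m) * 3 ^ m),
          disc H23 ytil N
            ![∑ j ∈ Finset.Icc 1 m, ((2 : ℝ) ^ (2 * j))⁻¹,
              ∑ j ∈ Finset.Icc 1 m, ((3 : ℝ) ^ j)⁻¹]) :
    α = (m : ℝ) ^ 2 / 3 -
        ∑ k₁ ∈ Finset.Icc 1 m, ∑ k₂ ∈ Finset.Icc 1 m,
          1 / (2 * (2 : ℝ) ^ (2 * k₁) * 3 ^ k₂) ∧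
    |α| ≥ (m : ℝ) ^ 2 / 4 := by
  have hcorner : ![∑ j ∈ Icc 1 m, ((2 : ℝ) ^ (2 * j))⁻¹, ∑ j ∈ Icc 1 m, ((3 : ℝ) ^ j)⁻¹] =
      ![yCoord 2 2 m, yCoord 3 1 m] := by
    simp [yCoord]
  have hvalue : α = (m : ℝ) ^ 2 / 3 - ∑ k₁ ∈ Icc 1 m, ∑ k₂ ∈ Icc 1 m,
      1 / (2 * (2 : ℝ) ^ (2 * k₁) * 3 ^ k₂) := by
    rw [hα, hcorner, sum_disc_H23 hy.modEq_ydot_two hy.modEq_ydot_three]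
    field_simp
  have hprod : ∑ k₁ ∈ Icc 1 m, ∑ k₂ ∈ Icc 1 m, 1 / (2 * (2 : ℝ) ^ (2 * k₁) * 3 ^ k₂) =
      yCoord 2 2 m * yCoord 3 1 m / 2 := by
    simp only [yCoord_two_mul_yCoord_three, sum_div, div_div, mul_assoc, mul_comm (2 : ℝ)]
  have hy₂ := yCoord_lt (b := 2) (τ := 2) (by norm_num) (by norm_num) m
  have hy₃ := yCoord_lt (b := 3) (τ := 1) (by norm_num) le_rfl m
  have hm' : (1 : ℝ) ≤ m := by exact_mod_cast hm
  refine ⟨hvalue, le_abs.2 (Or.inl ?_)⟩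
  rw [hvalue, hprod]
  norm_num at hy₂ hy₃
  nlinarith [yCoord_nonneg 2 2 m, yCoord_nonneg 3 1 m]
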